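/- Let n ≥ 2 and consider the polynomial ring ℚ[z₁,…,z_{n−1},t]. Define θ_k := z_k(z_k − (1/2)z_{k−1} − (1/2)z_{k+1} − t) for k = 1,…,n−1 (with the convention z₀ = z_n = 0), and θ_n := t. Then θ₁,…,θ_{n−1},θ_n is a regular sequence in ℚ[z₁,…,z_{n−1},t]. -/

import Mathlib

/-- A sequence `θ 0, …, θ (r-1)` of elements of a commutative ring `R` is a regular
sequence if for each `j` the image of `θ j` in the quotient `R ⧸ (θ 0, …, θ (j-1))`
is a non-zero-divisor (nonzero, with injective multiplication), and moreover the final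
quotient `R ⧸ (θ 0, …, θ (r-1))` is nonzero. -/
def IsRegularSeq {R : Type*} [CommRing R] {r : ℕ} (θ : Fin r → R) : Prop :=
  (∀ j : Fin r,
    Ideal.Quotient.mk (Ideal.span (θ '' {i | i < j})) (θ j) ≠ 0 ∧
      Function.Injective fun x : R ⧸ Ideal.span (θ '' {i | i < j}) =>
        Ideal.Quotient.mk (Ideal.span (θ '' {i | i < j})) (θ j) * x) ∧
  Nontrivial (R ⧸ Ideal.span (Set.range θ))

/-- The variable `z_k` (1-indexed, `k = 1, …, n-1`) of `ℚ[z₁,…,z_{n-1},t]`, with the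
convention `z₀ = z_n = 0`.  The variable `t` is `MvPolynomial.X none`. -/
noncomputable def zVar (n : ℕ) (k : ℕ) : MvPolynomial (Option (Fin (n - 1))) ℚ :=
  if h : 1 ≤ k ∧ k ≤ n - 1 then MvPolynomial.X (some ⟨k - 1, by omega⟩) else 0

/-- The Peterson relations: `θ k = z_k (z_k − (1/2) z_{k-1} − (1/2) z_{k+1} − t)` for
`k = 1, …, n-1` (with `z₀ = z_n = 0`), and `θ n = t`.  Here `j : Fin n` encodes
`k = j + 1`. -/
noncomputable def petersonTheta (n : ℕ) (j : Fin n) :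
    MvPolynomial (Option (Fin (n - 1))) ℚ :=
  if (j : ℕ) + 1 ≤ n - 1 then
    zVar n ((j : ℕ) + 1) *
      (zVar n ((j : ℕ) + 1) - MvPolynomial.C (1/2 : ℚ) * zVar n (j : ℕ)
        - MvPolynomial.C (1/2 : ℚ) * zVar n ((j : ℕ) + 2) - MvPolynomial.X none)
  else MvPolynomial.X none

/-!
Write `θ_k = z_k (a_k z_k - ½ z_{k-1} - ½ z_{k+1} - ℓ_k)`; for the prefix `θ₁, …, θ_j` take
`a_k = 1` and `ℓ_k = t`, except `ℓ_j = t + ½ z_{j+1}`. As a quadratic in `z_j`, the top relation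
`θ_j` has the roots `0` and `s = (½ z_{j-1} + ℓ_j) / a_j`, and substituting either root turns
`θ₁, …, θ_{j-1}` into a chain of the same shape, with top coefficient `1 - b / 2 > ½`
(`b ∈ {0, 1 / (2 a_j)}`) and `ℓ_{j-1}` enlarged by a nonnegative multiple of `ℓ_j`. Iterating
gives `2^j` substitution maps ("branches"), and by induction on `j` the ideal `(θ₁, …, θ_j)` is
the intersection of their kernels: an element vanishing on both branches `z_j = 0` and `z_j = s`
of `z_j (z_j - s)` lies in `(θ₁, …, θ_{j-1}, z_j (z_j - s))` as soon as `s` is a non-zero-divisor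
on the second branch, which holds because every branch image of `s` is positive at the point
`t = 1, z = 0`. Hence an element that no branch kills is a non-zero-divisor modulo
`(θ₁, …, θ_j)`; this applies to `θ_{j+1}`, whose second factor is at most `-1` at that point under
every branch, and to `t`.
-/

open MvPolynomial

section Substitution

variable {R σ : Type*} [CommRing R] [DecidableEq σ]

noncomputable def substVar (v : σ) (p : MvPolynomial σ R) :
    MvPolynomial σ R →ₐ[R] MvPolynomial σ R :=
  aeval (Function.update X v p)

@[simp] lemma substVar_X_self (v : σ) (p : MvPolynomial σ R) : substVar v p (X v) = p := by
  simp [substVar]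

lemma substVar_X_of_ne {u v : σ} (p : MvPolynomial σ R) (h : u ≠ v) :
    substVar v p (X u) = X u := by
  simp [substVar, h]

@[simp] lemma substVar_C (v : σ) (p : MvPolynomial σ R) (r : R) : substVar v p (C r) = C r := by
  simp [substVar]

lemma substVar_eq_self {v : σ} (p : MvPolynomial σ R) {g : MvPolynomial σ R}
    (hg : v ∉ g.vars) : substVar v p g = g :=
  hom_congr_vars (f₂ := RingHom.id _) (by ext; simp)
    (fun u hu _ => substVar_X_of_ne p (ne_of_mem_of_not_mem hu hg)) rfl

lemma sub_substVar_mem_span (v : σ) (p g : MvPolynomial σ R) :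
    g - substVar v p g ∈ Ideal.span {X v - p} := by
  rw [← Ideal.Quotient.eq]
  have : (Ideal.Quotient.mkₐ R (Ideal.span {X v - p})).comp (substVar v p) =
      Ideal.Quotient.mkₐ R _ := by
    ext u
    rcases eq_or_ne u v with rfl | h
    · rw [AlgHom.comp_apply, substVar_X_self, Ideal.Quotient.mkₐ_eq_mk, Ideal.Quotient.eq]
      exact Ideal.mem_span_singleton.mpr ⟨-1, by ring⟩
    · simp [substVar_X_of_ne p h]
  exact (DFunLike.congr_fun this g).symm

lemma map_substVar_le_sup (J : Ideal (MvPolynomial σ R)) (v : σ) (p : MvPolynomial σ R) :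
    J.map (substVar v p) ≤ J ⊔ Ideal.span {X v - p} := by
  rw [Ideal.map_le_iff_le_comap]
  intro g hg
  rw [Ideal.mem_comap, ← sub_sub_cancel g (substVar v p g)]
  exact sub_mem (Ideal.mem_sup_left hg) (Ideal.mem_sup_right (sub_substVar_mem_span v p g))

lemma mem_sup_span_of_substVar_mem {J J' : Ideal (MvPolynomial σ R)} {v : σ}
    {p g : MvPolynomial σ R} (hJ' : J' ≤ J ⊔ Ideal.span {X v - p}) (hg : substVar v p g ∈ J') :
    g ∈ J ⊔ Ideal.span {X v - p} := by
  rw [← sub_add_cancel g (substVar v p g)]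
  exact add_mem (Ideal.mem_sup_right (sub_substVar_mem_span v p g)) (hJ' hg)

/-- Gluing the two branches `X v = 0` and `X v = s` of `X v (X v - s) = 0`: here `J₀` and `J₁`
play the role of `J` restricted to each branch. -/
lemma mem_sup_span_X_mul_X_sub {J J₀ J₁ : Ideal (MvPolynomial σ R)} {v : σ}
    {s g : MvPolynomial σ R} (hs : substVar v s s = s)
    (hJ₀ : J₀ ≤ J ⊔ Ideal.span {X v - 0}) (hJ₁ : J₁ ≤ J ⊔ Ideal.span {X v - s})
    (hJ : J.map (substVar v s) ≤ J₁) (hs_reg : ∀ r, s * r ∈ J₁ → r ∈ J₁)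
    (hg₀ : substVar v 0 g ∈ J₀) (hg₁ : substVar v s g ∈ J₁) :
    g ∈ J ⊔ Ideal.span {X v * (X v - s)} := by
  obtain ⟨h, hh, _, hr, rfl⟩ := Submodule.mem_sup.mp (mem_sup_span_of_substVar_mem hJ₀ hg₀)
  obtain ⟨r, rfl⟩ := Ideal.mem_span_singleton'.mp hr
  have hmap : (J ⊔ Ideal.span {X v - s}).map (substVar v s) ≤ J₁ := by
    rw [Ideal.map_sup, Ideal.map_span, Set.image_singleton, map_sub, substVar_X_self, hs,
      sub_self, Ideal.span_singleton_eq_bot.mpr rfl, sup_bot_eq]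
    exact hJ
  have hrX : r * (X v - 0) ∈ J ⊔ Ideal.span {X v - s} := by
    simpa using sub_mem (mem_sup_span_of_substVar_mem hJ₁ hg₁) (Ideal.mem_sup_left hh)
  have hr : r ∈ J ⊔ Ideal.span {X v - s} := by
    have hsr := hmap (Ideal.mem_map_of_mem _ hrX)
    rw [map_mul, map_sub, substVar_X_self, map_zero, sub_zero, mul_comm] at hsr
    exact mem_sup_span_of_substVar_mem hJ₁ (hs_reg _ hsr)
  obtain ⟨h₁, hh₁, _, hu, rfl⟩ := Submodule.mem_sup.mp hr
  obtain ⟨u, rfl⟩ := Ideal.mem_span_singleton'.mp hu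
  have hdecomp : h + (h₁ + u * (X v - s)) * (X v - 0) =
      (h + h₁ * X v) + u * (X v * (X v - s)) := by
    ring
  rw [hdecomp]
  exact add_mem (Ideal.mem_sup_left (add_mem hh (Ideal.mul_mem_right _ _ hh₁)))
    (Ideal.mem_sup_right (Ideal.mul_mem_left _ _ (Ideal.mem_span_singleton_self _)))

end Substitution

lemma mk_ne_zero_and_isLeftRegular {R S F : Type*} [CommRing R] [CommRing S]
    [NoZeroDivisors S] [FunLike F R S] [RingHomClass F R S] {I : Ideal R} {P : F → Prop}
    (hI : ∀ g, (∀ φ, P φ → φ g = 0) → g ∈ I) (hker : ∀ φ, P φ → ∀ g ∈ I, φ g = 0)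
    (hP : ∃ φ, P φ) {f : R} (hf : ∀ φ, P φ → φ f ≠ 0) :
    Ideal.Quotient.mk I f ≠ 0 ∧ IsLeftRegular (Ideal.Quotient.mk I f) := by
  refine ⟨fun h0 => ?_, fun a b hab => ?_⟩
  · obtain ⟨φ, hφ⟩ := hP
    exact hf φ hφ (hker φ hφ f (Ideal.Quotient.eq_zero_iff_mem.mp h0))
  obtain ⟨a, rfl⟩ := Ideal.Quotient.mk_surjective a
  obtain ⟨b, rfl⟩ := Ideal.Quotient.mk_surjective b
  simp only [← map_mul, Ideal.Quotient.eq, ← mul_sub] at hab ⊢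
  refine hI _ fun φ hφ => ?_
  have := hker φ hφ _ hab
  rw [map_mul] at this
  exact (mul_eq_zero.mp this).resolve_left (hf φ hφ)

namespace QuadraticChain

variable {K σ : Type*} [Field K] (x : ℕ → σ)

noncomputable def var (m k : ℕ) : MvPolynomial σ K :=
  if 1 ≤ k ∧ k ≤ m then X (x k) else 0

noncomputable def rel (m : ℕ) (a : K) (ℓ : ℕ → MvPolynomial σ K) (k : ℕ) :
    MvPolynomial σ K :=
  var x m k * (C (if k = m then a else 1) * var x m k
    - C (1 / 2) * var x m (k - 1) - C (1 / 2) * var x m (k + 1) - ℓ k)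

noncomputable def ideal (m : ℕ) (a : K) (ℓ : ℕ → MvPolynomial σ K) :
    Ideal (MvPolynomial σ K) :=
  Ideal.span (rel x m a ℓ '' Set.Icc 1 m)

noncomputable def rootVal (m : ℕ) (b : K) (q : MvPolynomial σ K) : MvPolynomial σ K :=
  C b * var x m m + q

noncomputable def childLin (ℓ : ℕ → MvPolynomial σ K) (m : ℕ) (q : MvPolynomial σ K) :
    ℕ → MvPolynomial σ K :=
  Function.update ℓ m (ℓ m + C (1 / 2) * q)

/-- `C b * z_m + q` is one of the two roots `0` and `(½ z_m + ℓ_{m+1}) / a` of the top relation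
of the chain of length `m + 1`, viewed as a quadratic in `z_{m+1}`. -/
def IsTopRoot (m : ℕ) (a : K) (ℓ : ℕ → MvPolynomial σ K) (b : K) (q : MvPolynomial σ K) : Prop :=
  b = 0 ∧ q = 0 ∨ b = (2 * a)⁻¹ ∧ q = C a⁻¹ * ℓ (m + 1)

structure Admissible [LinearOrder K] (pt : σ → K) (m : ℕ) (a : K) (ℓ : ℕ → MvPolynomial σ K) :
    Prop where
  injOn : Set.InjOn x (Set.Icc 1 m)
  notMem_vars : ∀ i ∈ Set.Icc 1 m, ∀ k ∈ Set.Icc 1 m, x i ∉ (ℓ k).vars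
  half_lt : 1 / 2 < a
  eval_pos : ∀ k ∈ Set.Icc 1 m, 0 < eval pt (ℓ k)

variable {x}

lemma var_zero_left (k : ℕ) : var (K := K) x 0 k = 0 := by
  rw [var, if_neg (by omega)]

lemma var_of_lt {m k : ℕ} (h : m < k) : var (K := K) x m k = 0 := by
  rw [var, if_neg (by omega)]

lemma var_succ_of_ne {m k : ℕ} (h : k ≠ m + 1) :
    var (K := K) x (m + 1) k = var x m k := by
  unfold var
  congr 1
  simp only [eq_iff_iff]
  omega

lemma var_self {m : ℕ} (hm : 1 ≤ m) : var (K := K) x m m = X (x m) := by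
  simp [var, hm]

lemma vars_var_subset (m k : ℕ) : (var (K := K) x m k).vars ⊆ {x k} := by
  unfold var
  split_ifs <;> simp [vars_X]

@[simp] lemma rootVal_zero_zero (m : ℕ) : rootVal (K := K) x m 0 0 = 0 := by
  simp [rootVal]

lemma rel_top {m : ℕ} {a : K} (ha : a ≠ 0) (ℓ : ℕ → MvPolynomial σ K) :
    rel x (m + 1) a ℓ (m + 1) =
      C a * (X (x (m + 1)) * (X (x (m + 1)) - rootVal x m (2 * a)⁻¹ (C a⁻¹ * ℓ (m + 1)))) := by
  have h1 : (C a * C a⁻¹ : MvPolynomial σ K) = 1 := by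
    rw [← map_mul, mul_inv_cancel₀ ha, map_one]
  have h2 : (C a * C (2 * a)⁻¹ : MvPolynomial σ K) = C (1 / 2) := by
    rw [← map_mul]; congr 1; field_simp
  rw [rel, if_pos rfl, var_self (by omega), Nat.add_sub_cancel,
    var_succ_of_ne (by omega), var_of_lt (lt_add_one _), rootVal]
  linear_combination (X (x (m + 1)) * ℓ (m + 1)) * h1 + (X (x (m + 1)) * var x m m) * h2

lemma span_sup_le_ideal {m : ℕ} {a : K} (ha : a ≠ 0) (ℓ : ℕ → MvPolynomial σ K) :
    Ideal.span (rel x (m + 1) a ℓ '' Set.Icc 1 m) ⊔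
        Ideal.span {X (x (m + 1)) * (X (x (m + 1)) - rootVal x m (2 * a)⁻¹ (C a⁻¹ * ℓ (m + 1)))} ≤
      ideal x (m + 1) a ℓ := by
  refine sup_le (Ideal.span_mono (Set.image_mono (Set.Icc_subset_Icc_right (by omega))))
    (Ideal.span_le.mpr (Set.singleton_subset_iff.mpr ?_))
  have htop : rel x (m + 1) a ℓ (m + 1) ∈ ideal x (m + 1) a ℓ :=
    Ideal.subset_span ⟨m + 1, ⟨by omega, le_rfl⟩, rfl⟩
  have := Ideal.mul_mem_left _ (C a⁻¹) htop
  rwa [rel_top ha, ← mul_assoc, ← map_mul, inv_mul_cancel₀ ha, map_one, one_mul] at this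

namespace Admissible

variable [LinearOrder K] [IsStrictOrderedRing K] {pt : σ → K} {m : ℕ} {a b : K}
  {ℓ : ℕ → MvPolynomial σ K} {q : MvPolynomial σ K}

lemma ne_zero (h : Admissible x pt m a ℓ) : a ≠ 0 :=
  ne_of_gt (by linarith [h.half_lt])

lemma root_nonneg (h : Admissible x pt (m + 1) a ℓ) (hroot : IsTopRoot m a ℓ b q) :
    0 ≤ b ∧ 0 ≤ eval pt q := by
  have ha : 0 < a := by linarith [h.half_lt]
  rcases hroot with ⟨rfl, rfl⟩ | ⟨rfl, rfl⟩
  · simp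
  · rw [eval_mul, eval_C]
    exact ⟨by positivity, mul_nonneg (by positivity) (h.eval_pos _ ⟨by omega, le_rfl⟩).le⟩

lemma root_lt_one (h : Admissible x pt (m + 1) a ℓ) (hroot : IsTopRoot m a ℓ b q) :
    b < 1 := by
  rcases hroot with ⟨rfl, -⟩ | ⟨rfl, -⟩
  · exact zero_lt_one
  · exact inv_lt_one_of_one_lt₀ (by linarith [h.half_lt])

lemma notMem_vars_root (h : Admissible x pt (m + 1) a ℓ) (hroot : IsTopRoot m a ℓ b q) :
    ∀ i ∈ Set.Icc 1 (m + 1), x i ∉ q.vars := by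
  rcases hroot with ⟨-, rfl⟩ | ⟨-, rfl⟩
  · simp
  · intro i hi
    rw [vars_C_mul _ (inv_ne_zero h.ne_zero)]
    exact h.notMem_vars i hi _ ⟨by omega, le_rfl⟩

lemma child (h : Admissible x pt (m + 1) a ℓ) (hroot : IsTopRoot m a ℓ b q) :
    Admissible x pt m (1 - b / 2) (childLin ℓ m q) := by
  classical
  have hsub : Set.Icc 1 m ⊆ Set.Icc 1 (m + 1) := Set.Icc_subset_Icc_right (by omega)
  have hb := h.root_lt_one hroot
  obtain ⟨-, hq⟩ := h.root_nonneg hroot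
  refine ⟨h.injOn.mono hsub, fun i hi k hk => ?_, by linarith, fun k hk => ?_⟩ <;>
    rcases eq_or_ne k m with rfl | hkm
  · rw [childLin, Function.update_self]
    intro hmem
    rcases Finset.mem_union.mp (vars_add_subset _ _ hmem) with hmem | hmem
    · exact h.notMem_vars i (hsub hi) k (hsub hk) hmem
    · rw [vars_C_mul _ (by norm_num)] at hmem
      exact h.notMem_vars_root hroot i (hsub hi) hmem
  · rw [childLin, Function.update_of_ne hkm]
    exact h.notMem_vars i (hsub hi) k (hsub hk)
  · rw [childLin, Function.update_self, eval_add, eval_mul, eval_C]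
    have := h.eval_pos k (hsub hk)
    positivity
  · rw [childLin, Function.update_of_ne hkm]
    exact h.eval_pos k (hsub hk)

end Admissible

variable (x) [DecidableEq σ]

/-- Branch maps substitute a root of the top relation for the top variable, which leaves a chain
of length `m` with top coefficient `1 - b / 2` and linear parts `childLin ℓ m q`
(`substVar_rel`), and recurse. -/
inductive IsBranch : ℕ → K → (ℕ → MvPolynomial σ K) →
    (MvPolynomial σ K →ₐ[K] MvPolynomial σ K) → Prop
  | nil (a : K) (ℓ : ℕ → MvPolynomial σ K) : IsBranch 0 a ℓ (AlgHom.id K _)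
  | cons {m : ℕ} {a b : K} {ℓ : ℕ → MvPolynomial σ K} {q : MvPolynomial σ K}
      {φ : MvPolynomial σ K →ₐ[K] MvPolynomial σ K}
      (hroot : IsTopRoot m a ℓ b q)
      (hφ : IsBranch m (1 - b / 2) (childLin ℓ m q) φ) :
      IsBranch (m + 1) a ℓ (φ.comp (substVar (x (m + 1)) (rootVal x m b q)))

variable {x}

lemma substVar_var_of_ne {m k : ℕ} (hx : Set.InjOn x (Set.Icc 1 (m + 1)))
    (hk : k ≠ m + 1) (p : MvPolynomial σ K) :
    substVar (x (m + 1)) p (var x (m + 1) k) = var x m k := by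
  rw [var_succ_of_ne hk]
  refine substVar_eq_self p fun hmem => ?_
  have hxk := Finset.mem_singleton.mp (vars_var_subset m k hmem)
  by_cases hkm : 1 ≤ k ∧ k ≤ m
  · exact hk (hx ⟨hkm.1, by omega⟩ ⟨by omega, le_rfl⟩ hxk.symm)
  · simp [var, hkm] at hmem

lemma substVar_rootVal {m : ℕ} (hx : Set.InjOn x (Set.Icc 1 (m + 1))) {b : K}
    {q : MvPolynomial σ K} (hq : x (m + 1) ∉ q.vars) (p : MvPolynomial σ K) :
    substVar (x (m + 1)) p (rootVal x m b q) = rootVal x m b q := by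
  have hm : var (K := K) x m m = var x (m + 1) m := (var_succ_of_ne (by omega)).symm
  rw [rootVal, map_add, map_mul, substVar_C, substVar_eq_self p hq, hm,
    substVar_var_of_ne hx (by omega), ← hm]

lemma substVar_rel {m k : ℕ} (hx : Set.InjOn x (Set.Icc 1 (m + 1))) (hk : k ∈ Set.Icc 1 m)
    (a b : K) {ℓ : ℕ → MvPolynomial σ K} (hℓ : x (m + 1) ∉ (ℓ k).vars) (q : MvPolynomial σ K) :
    substVar (x (m + 1)) (rootVal x m b q) (rel x (m + 1) a ℓ k) =
      rel x m (1 - b / 2) (childLin ℓ m q) k := by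
  obtain ⟨hk1, hkm⟩ := hk
  simp only [rel, map_mul, map_sub, substVar_C, substVar_eq_self _ hℓ,
    substVar_var_of_ne hx (show k ≠ m + 1 by omega),
    substVar_var_of_ne hx (show k - 1 ≠ m + 1 by omega), if_neg (show k ≠ m + 1 by omega)]
  rcases eq_or_lt_of_le hkm with rfl | hlt
  · rw [var_of_lt (lt_add_one k), if_pos rfl, childLin, Function.update_self,
      var_self (by omega : 1 ≤ k + 1), substVar_X_self, rootVal]
    have hb : (C (1 - b / 2) : MvPolynomial σ K) = 1 - C (1 / 2) * C b := by
      rw [← map_mul, ← map_one C, ← map_sub]; ring_nf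
    rw [hb, map_one]
    ring
  · rw [substVar_var_of_ne hx (by omega), if_neg (by omega), childLin,
      Function.update_of_ne (by omega)]

lemma substVar_rel_top {m : ℕ} (hx : Set.InjOn x (Set.Icc 1 (m + 1))) {a b : K}
    (ha : a ≠ 0) {ℓ : ℕ → MvPolynomial σ K} (hℓ : x (m + 1) ∉ (ℓ (m + 1)).vars)
    {q : MvPolynomial σ K} (hroot : IsTopRoot m a ℓ b q) :
    substVar (x (m + 1)) (rootVal x m b q) (rel x (m + 1) a ℓ (m + 1)) = 0 := by
  have hq : x (m + 1) ∉ (C a⁻¹ * ℓ (m + 1)).vars := by rwa [vars_C_mul _ (inv_ne_zero ha)]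
  rw [rel_top ha, map_mul, map_mul, map_sub, substVar_X_self, substVar_C,
    substVar_rootVal hx hq]
  rcases hroot with ⟨rfl, rfl⟩ | ⟨rfl, rfl⟩ <;> simp

lemma map_span_rel {m : ℕ} (hx : Set.InjOn x (Set.Icc 1 (m + 1))) (a b : K)
    {ℓ : ℕ → MvPolynomial σ K} (hℓ : ∀ k ∈ Set.Icc 1 m, x (m + 1) ∉ (ℓ k).vars)
    (q : MvPolynomial σ K) :
    (Ideal.span (rel x (m + 1) a ℓ '' Set.Icc 1 m)).map
        (substVar (x (m + 1)) (rootVal x m b q)) =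
      ideal x m (1 - b / 2) (childLin ℓ m q) := by
  rw [Ideal.map_span, Set.image_image, ideal]
  exact congrArg _ (Set.image_congr fun k hk => substVar_rel hx hk a b (hℓ k hk) q)

namespace IsBranch

variable {m : ℕ} {a : K} {ℓ : ℕ → MvPolynomial σ K} {φ : MvPolynomial σ K →ₐ[K] MvPolynomial σ K}

lemma map_eq_self (hφ : IsBranch x m a ℓ φ) {p : MvPolynomial σ K}
    (hp : ∀ i ∈ Set.Icc 1 m, x i ∉ p.vars) : φ p = p := by
  induction hφ with
  | nil => rfl
  | cons _ _ ih =>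
    rw [AlgHom.comp_apply, substVar_eq_self _ (hp _ ⟨by omega, le_rfl⟩),
      ih fun i hi => hp i ⟨hi.1, Nat.le_succ_of_le hi.2⟩]

variable [LinearOrder K] [IsStrictOrderedRing K] {pt : σ → K}

lemma eval_nonneg (hφ : IsBranch x m a ℓ φ) (h : Admissible x pt m a ℓ) (k : ℕ) :
    0 ≤ eval pt (φ (var x m k)) := by
  induction hφ generalizing k with
  | nil => simp [var_zero_left]
  | @cons m a b ℓ q φ hroot hφ ih =>
    have hchild := h.child hroot
    rw [AlgHom.comp_apply]
    rcases eq_or_ne k (m + 1) with rfl | hk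
    · obtain ⟨hb, hq⟩ := h.root_nonneg hroot
      rw [var_self (by omega), substVar_X_self, rootVal, map_add, map_mul, algHom_C,
        algebraMap_eq,
        hφ.map_eq_self fun i hi => h.notMem_vars_root hroot i ⟨hi.1, Nat.le_succ_of_le hi.2⟩,
        eval_add, eval_mul, eval_C]
      have := ih hchild m
      positivity
    · rw [substVar_var_of_ne h.injOn hk]
      exact ih hchild k

lemma map_rel (hφ : IsBranch x m a ℓ φ) (h : Admissible x pt m a ℓ) {k : ℕ}
    (hk : k ∈ Set.Icc 1 m) : φ (rel x m a ℓ k) = 0 := by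
  induction hφ generalizing k with
  | nil => exact absurd (hk.1.trans hk.2) (by omega)
  | @cons m a b ℓ q φ hroot hφ ih =>
    have hℓ := h.notMem_vars (m + 1) ⟨by omega, le_rfl⟩ k hk
    rw [AlgHom.comp_apply]
    rcases eq_or_ne k (m + 1) with rfl | hk'
    · rw [substVar_rel_top h.injOn h.ne_zero hℓ hroot, map_zero]
    · have hk'' : k ∈ Set.Icc 1 m := ⟨hk.1, by have := hk.2; omega⟩
      rw [substVar_rel h.injOn hk'' a b hℓ q]
      exact ih (h.child hroot) hk''

lemma ideal_le_ker (hφ : IsBranch x m a ℓ φ) (h : Admissible x pt m a ℓ) :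
    ideal x m a ℓ ≤ RingHom.ker φ :=
  Ideal.span_le.mpr (by rintro _ ⟨k, hk, rfl⟩; exact hφ.map_rel h hk)

end IsBranch

lemma exists_isBranch (x : ℕ → σ) (m : ℕ) (a : K) (ℓ : ℕ → MvPolynomial σ K) :
    ∃ φ, IsBranch x m a ℓ φ := by
  induction m generalizing a ℓ with
  | zero => exact ⟨_, .nil a ℓ⟩
  | succ m ih =>
    obtain ⟨φ, hφ⟩ := ih (1 - 0 / 2) (childLin ℓ m 0)
    exact ⟨_, .cons (Or.inl ⟨rfl, rfl⟩) hφ⟩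

variable [LinearOrder K] [IsStrictOrderedRing K] {pt : σ → K}

lemma Admissible.map_rootVal_ne_zero {m : ℕ} {a : K} {ℓ : ℕ → MvPolynomial σ K}
    {φ : MvPolynomial σ K →ₐ[K] MvPolynomial σ K} (h : Admissible x pt (m + 1) a ℓ)
    (hφ : IsBranch x m (1 - (2 * a)⁻¹ / 2) (childLin ℓ m (C a⁻¹ * ℓ (m + 1))) φ) :
    φ (rootVal x m (2 * a)⁻¹ (C a⁻¹ * ℓ (m + 1))) ≠ 0 := by
  have hroot : IsTopRoot m a ℓ (2 * a)⁻¹ (C a⁻¹ * ℓ (m + 1)) := Or.inr ⟨rfl, rfl⟩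
  have hnn := hφ.eval_nonneg (h.child hroot) m
  have hpos := h.eval_pos (m + 1) ⟨by omega, le_rfl⟩
  have ha : 0 < a := by linarith [h.half_lt]
  intro h0
  have := congrArg (eval pt) h0
  rw [rootVal, map_add, map_mul, algHom_C, algebraMap_eq,
    hφ.map_eq_self fun i hi => h.notMem_vars_root hroot i ⟨hi.1, Nat.le_succ_of_le hi.2⟩,
    eval_add, eval_mul, eval_C, eval_mul, eval_C, map_zero] at this
  have : 0 < (2 * a)⁻¹ * eval pt (φ (var x m m)) + a⁻¹ * eval pt (ℓ (m + 1)) := by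
    positivity
  linarith

lemma mem_ideal_of_forall_isBranch {m : ℕ} {a : K} {ℓ : ℕ → MvPolynomial σ K}
    (h : Admissible x pt m a ℓ) {g : MvPolynomial σ K}
    (hg : ∀ φ, IsBranch x m a ℓ φ → φ g = 0) : g ∈ ideal x m a ℓ := by
  induction m generalizing a ℓ g with
  | zero =>
    rw [← AlgHom.id_apply (R := K) g, hg _ (.nil a ℓ)]
    exact zero_mem _
  | succ m ih =>
    have hℓ : ∀ k ∈ Set.Icc 1 m, x (m + 1) ∉ (ℓ k).vars :=
      fun k hk => h.notMem_vars (m + 1) ⟨by omega, le_rfl⟩ k ⟨hk.1, Nat.le_succ_of_le hk.2⟩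
    have hroot₀ : IsTopRoot m a ℓ 0 0 := Or.inl ⟨rfl, rfl⟩
    have hroot₁ : IsTopRoot m a ℓ (2 * a)⁻¹ (C a⁻¹ * ℓ (m + 1)) := Or.inr ⟨rfl, rfl⟩
    set s := rootVal x m (2 * a)⁻¹ (C a⁻¹ * ℓ (m + 1))
    set J₁ := ideal x m (1 - (2 * a)⁻¹ / 2) (childLin ℓ m (C a⁻¹ * ℓ (m + 1)))
    have hs : substVar (x (m + 1)) s s = s :=
      substVar_rootVal h.injOn (h.notMem_vars_root hroot₁ (m + 1) ⟨by omega, le_rfl⟩) s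
    have hJ₀ := map_span_rel h.injOn a 0 hℓ 0
    rw [rootVal_zero_zero] at hJ₀
    have hJ₁ := map_span_rel h.injOn a (2 * a)⁻¹ hℓ (C a⁻¹ * ℓ (m + 1))
    have hg₀ := ih (h.child hroot₀) (g := substVar (x (m + 1)) 0 g) fun φ hφ => by
      simpa using hg _ (.cons hroot₀ hφ)
    have hg₁ := ih (h.child hroot₁) (g := substVar (x (m + 1)) s g) fun φ hφ =>
      hg _ (.cons hroot₁ hφ)
    have hs_reg (r : MvPolynomial σ K) (hr : s * r ∈ J₁) : r ∈ J₁ :=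
      ih (h.child hroot₁) fun φ hφ => by
        have := hφ.ideal_le_ker (h.child hroot₁) hr
        rw [RingHom.mem_ker, map_mul] at this
        exact (mul_eq_zero.mp this).resolve_left (h.map_rootVal_ne_zero hφ)
    exact span_sup_le_ideal h.ne_zero ℓ <| mem_sup_span_X_mul_X_sub hs
      (hJ₀ ▸ map_substVar_le_sup _ _ _) (hJ₁ ▸ map_substVar_le_sup _ _ _) hJ₁.le hs_reg hg₀ hg₁

lemma Admissible.mk_ideal_ne_zero_and_isLeftRegular {m : ℕ} {a : K}
    {ℓ : ℕ → MvPolynomial σ K} (h : Admissible x pt m a ℓ) {f : MvPolynomial σ K}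
    (hf : ∀ φ, IsBranch x m a ℓ φ → φ f ≠ 0) :
    Ideal.Quotient.mk (ideal x m a ℓ) f ≠ 0 ∧
      IsLeftRegular (Ideal.Quotient.mk (ideal x m a ℓ) f) :=
  mk_ne_zero_and_isLeftRegular (fun _ => mem_ideal_of_forall_isBranch h)
    (fun _ hφ _ hg => hφ.ideal_le_ker h hg) (exists_isBranch x m a ℓ) hf

end QuadraticChain

open QuadraticChain

section Peterson

/-- `z_k = X (petersonVar n k)` for `1 ≤ k ≤ n - 1`; out-of-range indices are sent to `t`, a
junk value that `var` never reads. -/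
noncomputable def petersonVar (n k : ℕ) : Option (Fin (n - 1)) :=
  if h : 1 ≤ k ∧ k ≤ n - 1 then some ⟨k - 1, by omega⟩ else none

def petersonPoint {n : ℕ} (v : Option (Fin (n - 1))) : ℚ :=
  if v = none then 1 else 0

/-- In the prefix `θ₁, …, θ_j`, the upper neighbour `z_{j+1}` of the top relation is not a chain
variable, so it goes into the linear part. -/
noncomputable def petersonLin (n j k : ℕ) : MvPolynomial (Option (Fin (n - 1))) ℚ :=
  X none + if k = j then C (1 / 2) * zVar n (j + 1) else 0

variable {n : ℕ}

lemma petersonVar_ne {i k : ℕ} (hi : i ∈ Set.Icc 1 (n - 1)) (hik : i ≠ k) :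
    petersonVar n i ≠ petersonVar n k := by
  obtain ⟨hi1, hin⟩ := hi
  unfold petersonVar
  split_ifs <;> simp [Fin.ext_iff] <;> omega

lemma petersonVar_ne_none {i : ℕ} (hi : i ∈ Set.Icc 1 (n - 1)) : petersonVar n i ≠ none := by
  simp [petersonVar, hi.1, hi.2]

lemma petersonVar_injOn : Set.InjOn (petersonVar n) (Set.Icc 1 (n - 1)) :=
  fun _ hi _ _ h => by_contra fun hik => petersonVar_ne hi hik h

lemma zVar_eq_var {j k : ℕ} (hkj : k ≤ j) (hj : j ≤ n - 1) :
    zVar n k = var (petersonVar n) j k := by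
  unfold zVar var petersonVar
  split_ifs <;> first | rfl | omega

lemma petersonVar_notMem_vars_zVar {i k : ℕ} (hi : i ∈ Set.Icc 1 (n - 1)) (hik : i ≠ k) :
    petersonVar n i ∉ (zVar n k).vars := by
  unfold zVar
  split_ifs with hk
  · rw [vars_X, Finset.mem_singleton]
    convert petersonVar_ne hi hik using 1
    simp [petersonVar, hk]
  · simp

lemma petersonVar_notMem_vars_X_none {i : ℕ} (hi : i ∈ Set.Icc 1 (n - 1)) :
    petersonVar n i ∉ (X none : MvPolynomial (Option (Fin (n - 1))) ℚ).vars := by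
  rw [vars_X, Finset.mem_singleton]
  exact petersonVar_ne_none hi

lemma eval_petersonPoint_zVar (k : ℕ) : eval petersonPoint (zVar n k) = 0 := by
  unfold zVar
  split_ifs <;> simp [petersonPoint]

lemma admissible_peterson {j : ℕ} (hj : j ≤ n - 1) :
    Admissible (petersonVar n) petersonPoint j 1 (petersonLin n j) := by
  classical
  have hsub : Set.Icc 1 j ⊆ Set.Icc 1 (n - 1) := Set.Icc_subset_Icc_right hj
  refine ⟨petersonVar_injOn.mono hsub, fun i hi k _ hmem => ?_, by norm_num, fun k _ => ?_⟩
  · rcases Finset.mem_union.mp (vars_add_subset _ _ hmem) with hmem | hmem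
    · exact petersonVar_notMem_vars_X_none (hsub hi) hmem
    · split_ifs at hmem
      · rw [vars_C_mul _ (by norm_num)] at hmem
        exact petersonVar_notMem_vars_zVar (hsub hi) (by have := hi.2; omega) hmem
      · simp at hmem
  · simp only [petersonLin, eval_add, eval_X, petersonPoint]
    split_ifs <;> simp [eval_petersonPoint_zVar]

lemma petersonTheta_eq_rel {i : Fin n} {j : ℕ} (hij : (i : ℕ) < j) (hj : j ≤ n - 1) :
    petersonTheta n i = rel (petersonVar n) j 1 (petersonLin n j) (i + 1) := by
  rw [petersonTheta, if_pos (by omega), rel, ite_self, map_one, one_mul,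
    Nat.add_sub_cancel, ← zVar_eq_var (by omega) hj, ← zVar_eq_var (by omega) hj,
    petersonLin]
  rcases eq_or_lt_of_le (Nat.succ_le_of_lt hij) with rfl | hlt
  · rw [if_pos rfl, var_of_lt (by omega)]
    ring
  · rw [if_neg (by omega), ← zVar_eq_var (by omega) hj]
    ring

lemma image_petersonTheta (j : Fin n) :
    petersonTheta n '' {i | i < j} =
      rel (petersonVar n) j 1 (petersonLin n j) '' Set.Icc 1 j := by
  ext p
  constructor
  · rintro ⟨i, hi, rfl⟩
    exact ⟨i + 1, ⟨by omega, hi⟩, (petersonTheta_eq_rel hi (by omega)).symm⟩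
  · rintro ⟨k, ⟨hk1, hkj⟩, rfl⟩
    obtain ⟨i, rfl⟩ := Nat.exists_eq_add_of_le' hk1
    have hi : i < n := by have := j.isLt; omega
    have hij : (⟨i, hi⟩ : Fin n) < j := Fin.lt_def.mpr (show i < (j : ℕ) by omega)
    exact ⟨⟨i, hi⟩, hij, petersonTheta_eq_rel hij (by omega)⟩

lemma QuadraticChain.IsBranch.map_petersonTheta_ne_zero {j : Fin n}
    {φ : MvPolynomial (Option (Fin (n - 1))) ℚ →ₐ[ℚ] MvPolynomial (Option (Fin (n - 1))) ℚ}
    (hφ : IsBranch (petersonVar n) j 1 (petersonLin n j) φ) : φ (petersonTheta n j) ≠ 0 := by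
  have hsub : Set.Icc 1 (j : ℕ) ⊆ Set.Icc 1 (n - 1) := Set.Icc_subset_Icc_right (by omega)
  have ht : φ (X none) = X none :=
    hφ.map_eq_self fun i hi => petersonVar_notMem_vars_X_none (hsub hi)
  have hz {k : ℕ} (hk : j < k) : φ (zVar n k) = zVar n k :=
    hφ.map_eq_self fun i hi => petersonVar_notMem_vars_zVar (hsub hi) (by have := hi.2; omega)
  rw [petersonTheta]
  split_ifs with hjn
  · have hX : zVar n (j + 1) ≠ 0 := by
      rw [zVar_eq_var le_rfl hjn, var_self (by omega)]
      exact X_ne_zero _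
    have hnn := hφ.eval_nonneg (admissible_peterson (by omega)) j
    rw [← zVar_eq_var le_rfl (by omega)] at hnn
    simp only [map_mul, map_sub, algHom_C, algebraMap_eq, hz (k := j + 1) (by omega),
      hz (k := j + 2) (by omega), ht]
    refine mul_ne_zero hX fun h0 => ?_
    have := congrArg (eval petersonPoint) h0
    simp only [eval_sub, eval_mul, eval_C, eval_X, eval_petersonPoint_zVar, petersonPoint,
      map_zero] at this
    norm_num at this
    linarith
  · rw [ht]
    exact X_ne_zero _

lemma constantCoeff_petersonTheta (i : Fin n) : constantCoeff (petersonTheta n i) = 0 := by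
  have hz (k : ℕ) : constantCoeff (zVar n k) = 0 := by
    unfold zVar
    split_ifs <;> simp
  rw [petersonTheta]
  split_ifs <;> simp [hz]

lemma span_range_petersonTheta_ne_top : Ideal.span (Set.range (petersonTheta n)) ≠ ⊤ := by
  have hle : Ideal.span (Set.range (petersonTheta n)) ≤ RingHom.ker constantCoeff :=
    Ideal.span_le.mpr (Set.range_subset_iff.mpr constantCoeff_petersonTheta)
  exact (Ideal.ne_top_iff_one _).mpr fun h1 => by simpa using hle h1

end Peterson

theorem petersonTheta_isRegularSeq_general (n : ℕ) :
    IsRegularSeq (petersonTheta n) := by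
  refine ⟨fun j => ?_, Ideal.Quotient.nontrivial_iff.mpr span_range_petersonTheta_ne_top⟩
  have h := (admissible_peterson (n := n) (j := j) (by omega)).mk_ideal_ne_zero_and_isLeftRegular
    fun _ hφ => hφ.map_petersonTheta_ne_zero
  rwa [ideal, ← image_petersonTheta] at h

/-- For `n ≥ 2`, the sequence `θ₁, …, θ_{n-1}, θ_n = t` with
`θ_k = z_k (z_k − (1/2) z_{k-1} − (1/2) z_{k+1} − t)` (convention `z₀ = z_n = 0`)
is a regular sequence in `ℚ[z₁,…,z_{n-1},t]`. -/
theorem petersonTheta_isRegularSeq (n : ℕ) (hn : 2 ≤ n) :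
    IsRegularSeq (petersonTheta n) :=
  petersonTheta_isRegularSeq_general n
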